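/- Let m, d, l be positive integers with d·l ≥ 1 and let λ ≥ 1. Let x₁, …, x_m ∈ ℝ^d with ‖x_i‖₂ ≤ 1 for all i, and define Γ_i = λ·I_d + Σ_{j=1}^{i−1} x_j x_jᵀ for each i ∈ {1,…,m}. If Σ_{i=1}^{m} x_iᵀ Γ_i^{−1} x_i ≥ (m − 1)·4^{−l}, then (m − 1)·4^{−l} ≤ 2 d · log(1 + m/d). -/

import Mathlib

/-!
By the matrix determinant lemma, `det Γ_{i+1} = det Γ_i · (1 + x_iᵀ Γ_i⁻¹ x_i)`. Each term
`x_iᵀ Γ_i⁻¹ x_i` is at most `‖x_i‖² / λ ≤ 1`, and `u ≤ 2 log (1 + u)` on `[0, 2]`, so the potential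
telescopes to at most `2 log (det Γ_{m+1} / det Γ_1)`. Here `det Γ_1 = λ^d`, and AM–GM on the
eigenvalues gives `det Γ_{m+1} ≤ (tr Γ_{m+1} / d)^d ≤ (λ + m/d)^d ≤ (λ (1 + m/d))^d`.
-/

open Matrix Finset

theorem Real.prod_le_mean_pow_card {ι : Type*} (s : Finset ι) {z : ι → ℝ}
    (hz : ∀ i ∈ s, 0 ≤ z i) : ∏ i ∈ s, z i ≤ ((∑ i ∈ s, z i) / #s) ^ #s := by
  rcases s.eq_empty_or_nonempty with rfl | hs
  · simp
  have hcard : (#s : ℝ) ≠ 0 := by exact_mod_cast hs.card_pos.ne'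
  have hgm := Real.geom_mean_le_arith_mean_weighted s (fun _ ↦ (#s : ℝ)⁻¹) z
    (fun _ _ ↦ by positivity) (by simp [hcard]) hz
  rw [Real.finsetProd_rpow s z hz, ← mul_sum, inv_mul_eq_div] at hgm
  calc ∏ i ∈ s, z i = ((∏ i ∈ s, z i) ^ (#s : ℝ)⁻¹) ^ #s :=
        (Real.rpow_inv_natCast_pow (prod_nonneg hz) (by exact_mod_cast hcard)).symm
    _ ≤ _ := pow_le_pow_left₀ (Real.rpow_nonneg (prod_nonneg hz) _) hgm _

theorem Real.le_two_mul_log_one_add {u : ℝ} (h0 : 0 ≤ u) (h2 : u ≤ 2) :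
    u ≤ 2 * Real.log (1 + u) := by
  have h := Real.le_log_one_add_of_nonneg h0
  rw [div_le_iff₀ (by linarith)] at h
  nlinarith

namespace Matrix

variable {n : Type*}

theorem posDef_smul_one_add [DecidableEq n] {lam : ℝ} (hlam : 0 < lam) {S : Matrix n n ℝ}
    (hS : S.PosSemidef) : (lam • 1 + S).PosDef :=
  (PosDef.one.smul hlam).add_posSemidef hS

variable [Fintype n]

theorem posSemidef_sum_vecMulVec_self {ι : Type*} (s : Finset ι) (x : ι → n → ℝ) :
    (∑ j ∈ s, vecMulVec (x j) (x j)).PosSemidef :=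
  posSemidef_sum s fun j _ ↦ by simpa using posSemidef_vecMulVec_self_star (x j)

variable [DecidableEq n]

theorem det_add_vecMulVec {α : Type*} [CommRing α] {A : Matrix n n α} (hA : IsUnit A.det)
    (u v : n → α) : (A + vecMulVec u v).det = A.det * (1 + v ⬝ᵥ (A⁻¹ *ᵥ u)) := by
  rw [vecMulVec_eq Unit, det_add_replicateCol_mul_replicateRow hA]
  congr 1
  rw [det_unique, Matrix.mul_assoc, ← replicateCol_mulVec]
  rfl

theorem PosSemidef.det_le_trace_div_card_pow {A : Matrix n n ℝ} (hA : A.PosSemidef) :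
    A.det ≤ (A.trace / Fintype.card n) ^ Fintype.card n := by
  rw [hA.isHermitian.det_eq_prod_eigenvalues, hA.isHermitian.trace_eq_sum_eigenvalues]
  simpa using Real.prod_le_mean_pow_card univ fun i _ ↦ hA.eigenvalues_nonneg i

theorem det_smul_one_add_le {lam : ℝ} (hlam : 0 < lam) {S : Matrix n n ℝ} (hS : S.PosSemidef) :
    (lam • 1 + S).det ≤ (lam + S.trace / Fintype.card n) ^ Fintype.card n := by
  refine (posDef_smul_one_add hlam hS).posSemidef.det_le_trace_div_card_pow.trans_eq ?_
  rcases Nat.eq_zero_or_pos (Fintype.card n) with hn | hn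
  · simp [hn]
  · rw [trace_add, trace_smul, trace_one, smul_eq_mul, add_div,
      mul_div_cancel_right₀ _ (by positivity)]

theorem det_smul_one_add_sum_vecMulVec_le {lam : ℝ} (hlam : 1 ≤ lam) {ι : Type*}
    {s : Finset ι} {x : ι → n → ℝ} (hx : ∀ j ∈ s, x j ⬝ᵥ x j ≤ 1) :
    (lam • 1 + ∑ j ∈ s, vecMulVec (x j) (x j)).det
      ≤ (lam * (1 + #s / Fintype.card n)) ^ Fintype.card n := by
  have hS := posSemidef_sum_vecMulVec_self s x
  have htr : (∑ j ∈ s, vecMulVec (x j) (x j)).trace ≤ #s := by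
    simpa [trace_sum, trace_vecMulVec] using sum_le_sum hx
  refine (det_smul_one_add_le (one_pos.trans_le hlam) hS).trans ?_
  refine pow_le_pow_left₀ (by positivity [hS.trace_nonneg]) ?_ _
  calc lam + _ / Fintype.card n ≤ lam + #s / Fintype.card n := by gcongr
    _ ≤ lam * (1 + #s / Fintype.card n) := by
      rw [mul_one_add]
      gcongr
      exact le_mul_of_one_le_left (by positivity) hlam

theorem dotProduct_inv_mulVec_le {S : Matrix n n ℝ} (hS : S.PosSemidef) {lam : ℝ}
    (hlam : 0 < lam) (v : n → ℝ) :
    v ⬝ᵥ ((lam • 1 + S)⁻¹ *ᵥ v) ≤ (v ⬝ᵥ v) / lam := by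
  set A := lam • 1 + S
  set y := A⁻¹ *ᵥ v
  have hAy : A *ᵥ y = v := by
    rw [mulVec_mulVec, mul_nonsing_inv _ (posDef_smul_one_add hlam hS).det_pos.ne'.isUnit,
      one_mulVec]
  have hvy : v ⬝ᵥ y = lam * (y ⬝ᵥ y) + y ⬝ᵥ (S *ᵥ y) := by
    rw [← hAy, dotProduct_comm]
    simp [A, add_mulVec, smul_mulVec, dotProduct_add]
  have hSy := hS.dotProduct_mulVec_nonneg y
  -- complete the square: `0 ≤ ‖λ y - v‖²`
  have hsq := dotProduct_star_self_nonneg (lam • y - v)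
  simp only [star_trivial] at hSy hsq
  simp only [sub_dotProduct, dotProduct_sub, smul_dotProduct, dotProduct_smul, smul_eq_mul,
    dotProduct_comm y v] at hsq
  rw [le_div_iff₀ hlam]
  nlinarith [mul_nonneg hlam.le hSy]

theorem sum_dotProduct_inv_mulVec_le_two_mul_log_det {G : ℕ → Matrix n n ℝ} {v : ℕ → n → ℝ}
    (hG : ∀ i, (G i).PosDef) (hGsucc : ∀ i, G (i + 1) = G i + vecMulVec (v i) (v i))
    {k : ℕ} (hv : ∀ i < k, v i ⬝ᵥ ((G i)⁻¹ *ᵥ v i) ≤ 2) :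
    ∑ i ∈ range k, v i ⬝ᵥ ((G i)⁻¹ *ᵥ v i) ≤ 2 * (Real.log (G k).det - Real.log (G 0).det) := by
  induction k with
  | zero => simp
  | succ k ih =>
    have hq : 0 ≤ v k ⬝ᵥ ((G k)⁻¹ *ᵥ v k) := by
      simpa using (hG k).inv.posSemidef.dotProduct_mulVec_nonneg (v k)
    have hlog : Real.log (G (k + 1)).det
        = Real.log (G k).det + Real.log (1 + v k ⬝ᵥ ((G k)⁻¹ *ᵥ v k)) := by
      rw [hGsucc, det_add_vecMulVec (hG k).det_pos.ne'.isUnit,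
        Real.log_mul (hG k).det_pos.ne' (by positivity)]
    have hgain := Real.le_two_mul_log_one_add hq (hv k k.lt_succ_self)
    rw [sum_range_succ, hlog]
    linarith [ih fun i hi ↦ hv i (by omega)]

end Matrix

theorem potential_lower_vs_upper_general
    (m d l : ℕ)
    (lam : ℝ) (hlam : 1 ≤ lam)
    (x : ℕ → Fin d → ℝ)
    (hx : ∀ i ∈ Finset.Icc 1 m, Real.sqrt (x i ⬝ᵥ x i) ≤ 1)
    (Γ : ℕ → Matrix (Fin d) (Fin d) ℝ)
    (hΓ : ∀ i : ℕ, Γ i = lam • (1 : Matrix (Fin d) (Fin d) ℝ)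
        + ∑ j ∈ Finset.Icc 1 (i - 1), Matrix.vecMulVec (x j) (x j))
    (h : ((m : ℝ) - 1) * ((4 : ℝ) ^ l)⁻¹
        ≤ ∑ i ∈ Finset.Icc 1 m, x i ⬝ᵥ ((Γ i)⁻¹).mulVec (x i)) :
    ((m : ℝ) - 1) * ((4 : ℝ) ^ l)⁻¹ ≤ 2 * d * Real.log (1 + (m : ℝ) / d) := by
  have hlam0 : 0 < lam := one_pos.trans_le hlam
  have hxx : ∀ i ∈ Icc 1 m, x i ⬝ᵥ x i ≤ 1 := fun i hi ↦ Real.sqrt_le_one.mp (hx i hi)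
  have hpd : ∀ i, (Γ i).PosDef := fun i ↦
    hΓ i ▸ posDef_smul_one_add hlam0 (posSemidef_sum_vecMulVec_self _ x)
  have hsucc : ∀ i, Γ (i + 1 + 1) = Γ (i + 1) + vecMulVec (x (i + 1)) (x (i + 1)) := by
    intro i
    rw [hΓ, hΓ, Nat.add_sub_cancel, Nat.add_sub_cancel, sum_Icc_succ_top (by omega), add_assoc]
  have hpot := sum_dotProduct_inv_mulVec_le_two_mul_log_det (G := fun i ↦ Γ (i + 1))
    (v := fun i ↦ x (i + 1)) (fun i ↦ hpd _) hsucc (k := m) fun i hi ↦ by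
      rw [hΓ]
      refine (dotProduct_inv_mulVec_le (posSemidef_sum_vecMulVec_self _ x) hlam0 _).trans ?_
      rw [div_le_iff₀ hlam0]
      linarith [hxx (i + 1) (mem_Icc.mpr ⟨by omega, by omega⟩)]
  have hdet1 : (Γ 1).det = lam ^ d := by simp [hΓ]
  have hdetm : (Γ (m + 1)).det ≤ (lam * (1 + m / d)) ^ d := by
    simpa [hΓ] using det_smul_one_add_sum_vecMulVec_le hlam hxx
  calc ((m : ℝ) - 1) * ((4 : ℝ) ^ l)⁻¹
      ≤ ∑ i ∈ Icc 1 m, x i ⬝ᵥ ((Γ i)⁻¹ *ᵥ x i) := h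
    _ = ∑ i ∈ range m, x (i + 1) ⬝ᵥ ((Γ (i + 1))⁻¹ *ᵥ x (i + 1)) := by
      rw [range_eq_Ico, sum_Ico_add' (fun i ↦ x i ⬝ᵥ ((Γ i)⁻¹ *ᵥ x i)), zero_add,
        Ico_add_one_right_eq_Icc]
    _ ≤ 2 * (Real.log (Γ (m + 1)).det - Real.log (Γ 1).det) := hpot
    _ ≤ 2 * (Real.log ((lam * (1 + m / d)) ^ d) - Real.log (lam ^ d)) := by
      rw [hdet1]
      gcongr
      exact (hpd _).det_pos
    _ = 2 * d * Real.log (1 + (m : ℝ) / d) := by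
      rw [Real.log_pow, Real.log_pow, Real.log_mul hlam0.ne' (by positivity)]
      ring

/-- Combining the elliptical potential upper bound with the per-level lower bound:
if `∑_{i=1}^m x_iᵀ Γ_i⁻¹ x_i ≥ (m-1) 4^{-l}` where
`Γ_i = λ I + ∑_{j<i} x_j x_jᵀ`, `λ ≥ 1` and `‖x_i‖₂ ≤ 1`, then
`(m-1) 4^{-l} ≤ 2 d log(1 + m/d)`. -/
theorem potential_lower_vs_upper
    (m d l : ℕ) (hm : 0 < m) (hd : 0 < d) (hl : 0 < l)
    (hdl : 1 ≤ d * l)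
    (lam : ℝ) (hlam : 1 ≤ lam)
    (x : ℕ → Fin d → ℝ)
    (hx : ∀ i ∈ Finset.Icc 1 m, Real.sqrt (x i ⬝ᵥ x i) ≤ 1)
    (Γ : ℕ → Matrix (Fin d) (Fin d) ℝ)
    (hΓ : ∀ i : ℕ, Γ i = lam • (1 : Matrix (Fin d) (Fin d) ℝ)
        + ∑ j ∈ Finset.Icc 1 (i - 1), Matrix.vecMulVec (x j) (x j))
    (h : ((m : ℝ) - 1) * ((4 : ℝ) ^ l)⁻¹
        ≤ ∑ i ∈ Finset.Icc 1 m, x i ⬝ᵥ ((Γ i)⁻¹).mulVec (x i)) :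
    ((m : ℝ) - 1) * ((4 : ℝ) ^ l)⁻¹ ≤ 2 * d * Real.log (1 + (m : ℝ) / d) :=
  potential_lower_vs_upper_general m d l lam hlam x hx Γ hΓ h
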